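/- Under the isomorphism σ: (O_α × g)/(O_α × g)^⊥ ≅ (g_k ⊕ g_0 ⊕ g_{−k}) × g, the image of (O_α × g) ∩ g[u] (with g[u] embedded diagonally via p ↦ (p(u), p(0))) equals Δ_α, the set of pairs (a, b) with a = a_0 + a_{−k} ∈ g_0 + g_{−k}, b = b_0 + b_{−1} + ... + b_{−k} ∈ g_0 + g_{−1} + ... + g_{−k}, and a_0 = b_0. -/

import Mathlib

attribute [-instance] HahnSeries.powerSeriesAlgebra

open TensorProduct

/-- `u^{-m}·𝕆` where `𝕆 = ℂ[[u⁻¹]]`: Laurent series (in `t = u⁻¹`) whose coefficients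
vanish below `m`. -/
noncomputable def coeffGe (m : ℤ) : Submodule ℂ (LaurentSeries ℂ) where
  carrier := {f | ∀ n < m, f.coeff n = 0}
  add_mem' := by
    intro a b ha hb n hn
    simp only [HahnSeries.coeff_add, ha n hn, hb n hn, add_zero]
  zero_mem' := by intro n hn; simp
  smul_mem' := by
    intro c f hf n hn
    simp only [HahnSeries.coeff_smul, hf n hn, smul_zero]

/-- The image of `S ⊗ W` in `ℂ((u⁻¹)) ⊗ g`. -/
noncomputable def tens {g : Type*} [AddCommGroup g] [Module ℂ g]
    (S : Submodule ℂ (LaurentSeries ℂ)) (W : Submodule ℂ g) :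
    Submodule ℂ (LaurentSeries ℂ ⊗[ℂ] g) :=
  LinearMap.range (TensorProduct.map S.subtype W.subtype)

/-! The image is computed by reading off three coefficients. For `p ∈ g[u]` the series
`p(u)` has no positive powers of `u⁻¹` and its constant coefficient is `p(0)`; hence the
`G k`-part of `σ` vanishes on polynomials and the second component equals the constant
coefficient, which lies in `G 0 + ⋯ + G (-k)` by the shape of `𝕆_α`. Conversely
`(a₀ + a₋ₖ, b)` is the image of `1 ⊗ b + u ⊗ a₋ₖ`. -/

section LaurentSeries

lemma single_mem_coeffGe {a m : ℤ} (h : m ≤ a) (c : ℂ) :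
    (HahnSeries.single a c : LaurentSeries ℂ) ∈ coeffGe m :=
  fun n hn => HahnSeries.coeff_single_of_ne (by omega)

lemma one_mem_coeffGe {m : ℤ} (h : m ≤ 0) : (1 : LaurentSeries ℂ) ∈ coeffGe m := by
  rw [← HahnSeries.single_zero_one]
  exact single_mem_coeffGe h 1

lemma coeff_aeval_single_neg_one (p : Polynomial ℂ) (n : ℤ) :
    (Polynomial.aeval (HahnSeries.single (-1) 1 : LaurentSeries ℂ) p).coeff n
      = if n ≤ 0 then p.coeff (-n).toNat else 0 := by
  induction p using Polynomial.induction_on' with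
  | add p q hp hq =>
    simp only [map_add, HahnSeries.coeff_add, hp, hq, Polynomial.coeff_add]
    split_ifs <;> simp
  | monomial m a =>
    simp only [Polynomial.aeval_monomial, HahnSeries.algebraMap_apply, Algebra.algebraMap_self,
      RingHom.id_apply, HahnSeries.C_apply, HahnSeries.single_pow, one_pow,
      HahnSeries.single_mul_single, zero_add, mul_one, HahnSeries.coeff_single,
      Polynomial.coeff_monomial, nsmul_eq_mul, mul_neg_one]
    split_ifs <;> first | rfl | omega

end LaurentSeries

section Tensor

variable {g : Type*} [AddCommGroup g] [Module ℂ g]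

lemma tmul_mem_tens {S : Submodule ℂ (LaurentSeries ℂ)} {W : Submodule ℂ g}
    {f : LaurentSeries ℂ} (hf : f ∈ S) {x : g} (hx : x ∈ W) : f ⊗ₜ[ℂ] x ∈ tens S W :=
  ⟨⟨f, hf⟩ ⊗ₜ ⟨x, hx⟩, rfl⟩

lemma tens_le {S : Submodule ℂ (LaurentSeries ℂ)} {W : Submodule ℂ g}
    {T : Submodule ℂ (LaurentSeries ℂ ⊗[ℂ] g)} (h : ∀ f ∈ S, ∀ x ∈ W, f ⊗ₜ[ℂ] x ∈ T) :
    tens S W ≤ T := by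
  rw [tens, TensorProduct.range_map_eq_span_tmul, Submodule.span_le]
  rintro _ ⟨f, x, rfl⟩
  exact h f f.2 x x.2

end Tensor

section Grading

variable {g : Type*} [AddCommGroup g] [Module ℂ g] {G : ℤ → Submodule ℂ g} {π : ℤ → g →ₗ[ℂ] g}

lemma proj_mem (hGtop : (⨆ r : ℤ, G r) = ⊤) (hπ₁ : ∀ r : ℤ, ∀ x ∈ G r, π r x = x)
    (hπ₂ : ∀ r s : ℤ, r ≠ s → ∀ x ∈ G s, π r x = 0) (r : ℤ) (x : g) : π r x ∈ G r := by
  have hx : x ∈ ⨆ s, G s := hGtop ▸ Submodule.mem_top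
  refine Submodule.iSup_induction G (motive := fun y => π r y ∈ G r) hx (fun s y hy => ?_)
    (by simp) (fun y z hy hz => by simpa using add_mem hy hz)
  obtain rfl | hrs := eq_or_ne r s
  · rwa [hπ₁ r y hy]
  · rw [hπ₂ r s hrs y hy]
    exact zero_mem _

lemma proj_add_eq_left (hπ₁ : ∀ r : ℤ, ∀ x ∈ G r, π r x = x)
    (hπ₂ : ∀ r s : ℤ, r ≠ s → ∀ x ∈ G s, π r x = 0) {r s : ℤ} (hrs : r ≠ s) {x y : g}
    (hx : x ∈ G r) (hy : y ∈ G s) : π r (x + y) = x := by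
  rw [map_add, hπ₁ r x hx, hπ₂ r s hrs y hy, add_zero]

noncomputable def oAlpha (k : ℤ) (G : ℤ → Submodule ℂ g) :
    Submodule ℂ (LaurentSeries ℂ ⊗[ℂ] g) :=
  (⨆ r ∈ Set.Icc 1 k, tens (coeffGe 1) (G r)) ⊔
    (⨆ r ∈ Set.Icc (1 - k) 0, tens (coeffGe 0) (G r)) ⊔ tens (coeffGe (-1)) (G (-k))

def deltaAlpha (k : ℤ) (G : ℤ → Submodule ℂ g) (π : ℤ → g →ₗ[ℂ] g) : Set (g × g) :=
  {p | p.1 ∈ G 0 ⊔ G (-k) ∧ p.2 ∈ (⨆ r ∈ Set.Icc (-k) (0 : ℤ), G r) ∧ π 0 p.1 = π 0 p.2}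

lemma coeff_zero_mem_of_mem_oAlpha {k : ℤ} (hk : 0 ≤ k) {c : (LaurentSeries ℂ ⊗[ℂ] g) →ₗ[ℂ] g}
    (hc : ∀ (f : LaurentSeries ℂ) (x : g), c (f ⊗ₜ x) = f.coeff 0 • x)
    {z : LaurentSeries ℂ ⊗[ℂ] g} (hz : z ∈ oAlpha k G) :
    c z ∈ ⨆ r ∈ Set.Icc (-k) (0 : ℤ), G r := by
  suffices oAlpha k G ≤ (⨆ r ∈ Set.Icc (-k) (0 : ℤ), G r).comap c from this hz
  refine sup_le (sup_le (iSup₂_le fun r _ => ?_) (iSup₂_le fun r hr => ?_)) ?_ <;>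
    refine tens_le fun f hf x hx => ?_ <;> rw [Submodule.mem_comap, hc]
  · rw [hf 0 zero_lt_one, zero_smul]
    exact zero_mem _
  · exact Submodule.mem_iSup_of_mem r <|
      Submodule.mem_iSup_of_mem ⟨by linarith [hr.1], hr.2⟩ (Submodule.smul_mem _ _ hx)
  · exact Submodule.mem_iSup_of_mem (-k) <|
      Submodule.mem_iSup_of_mem ⟨le_rfl, by omega⟩ (Submodule.smul_mem _ _ hx)

lemma one_tmul_mem_oAlpha {k : ℤ} {b : g} (hb : b ∈ ⨆ r ∈ Set.Icc (-k) (0 : ℤ), G r) :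
    (1 : LaurentSeries ℂ) ⊗ₜ[ℂ] b ∈ oAlpha k G := by
  suffices (⨆ r ∈ Set.Icc (-k) (0 : ℤ), G r) ≤ (oAlpha k G).comap (TensorProduct.mk ℂ _ g 1)
    from this hb
  refine iSup₂_le fun r hr x hx => ?_
  by_cases hr₁ : 1 - k ≤ r
  · exact Submodule.mem_sup_left <| Submodule.mem_sup_right <| Submodule.mem_iSup_of_mem r <|
      Submodule.mem_iSup_of_mem ⟨hr₁, hr.2⟩ (tmul_mem_tens (one_mem_coeffGe le_rfl) hx)
  · obtain rfl : r = -k := by linarith [hr.1]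
    exact Submodule.mem_sup_right (tmul_mem_tens (one_mem_coeffGe (by norm_num)) hx)

end Grading

section Polynomials

variable {g : Type*} [AddCommGroup g] [Module ℂ g]
  {em : (Polynomial ℂ ⊗[ℂ] g) →ₗ[ℂ] (LaurentSeries ℂ ⊗[ℂ] g) × g}
  {c : (LaurentSeries ℂ ⊗[ℂ] g) →ₗ[ℂ] g}

lemma coeff_one_fst_em_eq_zero
    (hem : ∀ (p : Polynomial ℂ) (x : g), em (p ⊗ₜ x) =
      ((Polynomial.aeval (HahnSeries.single (-1) 1 : LaurentSeries ℂ) p) ⊗ₜ x,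
        Polynomial.eval 0 p • x))
    (hc : ∀ (f : LaurentSeries ℂ) (x : g), c (f ⊗ₜ x) = f.coeff 1 • x) (t : Polynomial ℂ ⊗[ℂ] g) :
    c (em t).1 = 0 := by
  have : c ∘ₗ LinearMap.fst ℂ _ _ ∘ₗ em = 0 :=
    TensorProduct.ext' fun p x => by simp [hem, hc, coeff_aeval_single_neg_one]
  exact LinearMap.congr_fun this t

lemma snd_em_eq_coeff_zero
    (hem : ∀ (p : Polynomial ℂ) (x : g), em (p ⊗ₜ x) =
      ((Polynomial.aeval (HahnSeries.single (-1) 1 : LaurentSeries ℂ) p) ⊗ₜ x,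
        Polynomial.eval 0 p • x))
    (hc : ∀ (f : LaurentSeries ℂ) (x : g), c (f ⊗ₜ x) = f.coeff 0 • x) (t : Polynomial ℂ ⊗[ℂ] g) :
    (em t).2 = c (em t).1 := by
  have : LinearMap.snd ℂ _ _ ∘ₗ em = c ∘ₗ LinearMap.fst ℂ _ _ ∘ₗ em :=
    TensorProduct.ext' fun p x => by
      simp [hem, hc, coeff_aeval_single_neg_one, Polynomial.coeff_zero_eq_eval_zero]
  exact LinearMap.congr_fun this t

end Polynomials

section Image

variable {g : Type*} [AddCommGroup g] [Module ℂ g] {k : ℤ} {G : ℤ → Submodule ℂ g}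
  {π : ℤ → g →ₗ[ℂ] g} {cf : ℤ → (LaurentSeries ℂ ⊗[ℂ] g) →ₗ[ℂ] g}
  {σ' : ((LaurentSeries ℂ ⊗[ℂ] g) × g) →ₗ[ℂ] g × g}
  {em : (Polynomial ℂ ⊗[ℂ] g) →ₗ[ℂ] (LaurentSeries ℂ ⊗[ℂ] g) × g}

theorem image_subset_deltaAlpha (hk : 0 < k) (hGtop : (⨆ r : ℤ, G r) = ⊤)
    (hπ₁ : ∀ r : ℤ, ∀ x ∈ G r, π r x = x) (hπ₂ : ∀ r s : ℤ, r ≠ s → ∀ x ∈ G s, π r x = 0)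
    (hcf : ∀ (n : ℤ) (f : LaurentSeries ℂ) (x : g), cf n (f ⊗ₜ x) = f.coeff n • x)
    (hσ' : ∀ z : (LaurentSeries ℂ ⊗[ℂ] g) × g,
      σ' z = (π k (cf 1 z.1) + π 0 (cf 0 z.1) + π (-k) (cf (-1) z.1), z.2))
    (hem : ∀ (p : Polynomial ℂ) (x : g), em (p ⊗ₜ x) =
      ((Polynomial.aeval (HahnSeries.single (-1) 1 : LaurentSeries ℂ) p) ⊗ₜ x,
        Polynomial.eval 0 p • x)) :
    σ' '' (((oAlpha k G).prod (⊤ : Submodule ℂ g) : Set _) ∩ Set.range em) ⊆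
      deltaAlpha k G π := by
  rintro _ ⟨_, ⟨hz, t, rfl⟩, rfl⟩
  have hproj := proj_mem hGtop hπ₁ hπ₂
  rw [hσ', coeff_one_fst_em_eq_zero hem (hcf 1), map_zero, zero_add,
    snd_em_eq_coeff_zero hem (hcf 0)]
  exact ⟨Submodule.add_mem_sup (hproj 0 _) (hproj (-k) _),
    coeff_zero_mem_of_mem_oAlpha hk.le (hcf 0) hz.1,
    proj_add_eq_left hπ₁ hπ₂ (by omega) (hproj 0 _) (hproj (-k) _)⟩

theorem deltaAlpha_subset_image (hk : k ≠ 0)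
    (hπ₁ : ∀ r : ℤ, ∀ x ∈ G r, π r x = x) (hπ₂ : ∀ r s : ℤ, r ≠ s → ∀ x ∈ G s, π r x = 0)
    (hcf : ∀ (n : ℤ) (f : LaurentSeries ℂ) (x : g), cf n (f ⊗ₜ x) = f.coeff n • x)
    (hσ' : ∀ z : (LaurentSeries ℂ ⊗[ℂ] g) × g,
      σ' z = (π k (cf 1 z.1) + π 0 (cf 0 z.1) + π (-k) (cf (-1) z.1), z.2))
    (hem : ∀ (p : Polynomial ℂ) (x : g), em (p ⊗ₜ x) =
      ((Polynomial.aeval (HahnSeries.single (-1) 1 : LaurentSeries ℂ) p) ⊗ₜ x,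
        Polynomial.eval 0 p • x)) :
    deltaAlpha k G π ⊆
      σ' '' (((oAlpha k G).prod (⊤ : Submodule ℂ g) : Set _) ∩ Set.range em) := by
  rintro ⟨a, b⟩ ⟨ha, hb, hab⟩
  obtain ⟨a₀, ha₀, a₁, ha₁, rfl⟩ := Submodule.mem_sup.mp ha
  have hem_witness : em (1 ⊗ₜ b + Polynomial.X ⊗ₜ a₁) =
      ((1 : LaurentSeries ℂ) ⊗ₜ b + HahnSeries.single (-1) 1 ⊗ₜ a₁, b) := by
    simp [hem]
  refine ⟨em (1 ⊗ₜ b + Polynomial.X ⊗ₜ a₁), ⟨?_, _, rfl⟩, ?_⟩ <;> rw [hem_witness]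
  · exact ⟨add_mem (one_tmul_mem_oAlpha hb) <| Submodule.mem_sup_right <|
      tmul_mem_tens (single_mem_coeffGe le_rfl 1) ha₁, Submodule.mem_top⟩
  · have hb₀ : π 0 b = a₀ := hab ▸ proj_add_eq_left hπ₁ hπ₂ (by omega) ha₀ ha₁
    simp [hσ', hcf, HahnSeries.coeff_one, hb₀, hπ₁ _ _ ha₁]

end Image

theorem image_of_polynomials_is_Delta_alpha_general
    {g : Type*} [LieRing g] [LieAlgebra ℂ g]
    (k : ℤ) (hk : 1 ≤ k)
    (G : ℤ → Submodule ℂ g)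
    (hGtop : (⨆ r : ℤ, G r) = ⊤)
    (cf : ℤ → ((LaurentSeries ℂ ⊗[ℂ] g) →ₗ[ℂ] g))
    (hcf : ∀ (n : ℤ) (f : LaurentSeries ℂ) (x : g), cf n (f ⊗ₜ x) = f.coeff n • x)
    (π : ℤ → (g →ₗ[ℂ] g))
    (hπ₁ : ∀ r : ℤ, ∀ x ∈ G r, π r x = x)
    (hπ₂ : ∀ r s : ℤ, r ≠ s → ∀ x ∈ G s, π r x = 0)
    (Oα : Submodule ℂ (LaurentSeries ℂ ⊗[ℂ] g))
    (hOα : Oα = (⨆ r ∈ Set.Icc 1 k, tens (coeffGe 1) (G r)) ⊔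
        (⨆ r ∈ Set.Icc (1 - k) 0, tens (coeffGe 0) (G r)) ⊔
        tens (coeffGe (-1)) (G (-k)))
    (σ' : ((LaurentSeries ℂ ⊗[ℂ] g) × g) →ₗ[ℂ] g × g)
    (hσ' : ∀ z : (LaurentSeries ℂ ⊗[ℂ] g) × g,
      σ' z = (π k (cf 1 z.1) + π 0 (cf 0 z.1) + π (-k) (cf (-1) z.1), z.2))
    -- the embedding `g[u] → g((u⁻¹)) × g`, `p(u) ↦ (p(u), p(0))`
    (em : (Polynomial ℂ ⊗[ℂ] g) →ₗ[ℂ] (LaurentSeries ℂ ⊗[ℂ] g) × g)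
    (hem : ∀ (p : Polynomial ℂ) (x : g),
      em (p ⊗ₜ x) =
        ((Polynomial.aeval (HahnSeries.single (-1) 1 : LaurentSeries ℂ) p) ⊗ₜ x,
         Polynomial.eval 0 p • x)) :
    σ' '' ((Oα.prod (⊤ : Submodule ℂ g) : Set _) ∩ Set.range em)
      = {p : g × g | p.1 ∈ G 0 ⊔ G (-k) ∧
          p.2 ∈ (⨆ r ∈ Set.Icc (-k) (0 : ℤ), G r) ∧ π 0 p.1 = π 0 p.2} := by
  obtain rfl : Oα = oAlpha k G := hOα
  exact (image_subset_deltaAlpha hk hGtop hπ₁ hπ₂ hcf hσ' hem).antisymm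
    (deltaAlpha_subset_image (by omega) hπ₁ hπ₂ hcf hσ' hem)

/-- Under the map `σ` inducing the isomorphism
`(𝕆_α × g)/(𝕆_α × g)^⊥ ≅ (G k ⊕ G 0 ⊕ G (−k)) × g`, the image of
`(𝕆_α × g) ∩ g[u]` (with `g[u]` embedded via `p ↦ (p(u), p(0))`) equals `Δ_α`, the
set of pairs `(a, b)` with `a ∈ G 0 + G (−k)`, `b ∈ G 0 + G (−1) + … + G (−k)`, and
equal `G 0`-components (`a₀ = b₀`). -/
theorem image_of_polynomials_is_Delta_alpha
    {g : Type*} [LieRing g] [LieAlgebra ℂ g] [FiniteDimensional ℂ g]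
    [LieAlgebra.IsSimple ℂ g]
    (k : ℤ) (hk : 1 ≤ k)
    (G : ℤ → Submodule ℂ g)
    (hGbr : ∀ r s : ℤ, ∀ x ∈ G r, ∀ y ∈ G s, ⁅x, y⁆ ∈ G (r + s))
    (hGout : ∀ r : ℤ, (r < -k ∨ k < r) → G r = ⊥)
    (hGtop : (⨆ r : ℤ, G r) = ⊤)
    (cf : ℤ → ((LaurentSeries ℂ ⊗[ℂ] g) →ₗ[ℂ] g))
    (hcf : ∀ (n : ℤ) (f : LaurentSeries ℂ) (x : g), cf n (f ⊗ₜ x) = f.coeff n • x)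
    (π : ℤ → (g →ₗ[ℂ] g))
    (hπ₁ : ∀ r : ℤ, ∀ x ∈ G r, π r x = x)
    (hπ₂ : ∀ r s : ℤ, r ≠ s → ∀ x ∈ G s, π r x = 0)
    (Oα : Submodule ℂ (LaurentSeries ℂ ⊗[ℂ] g))
    (hOα : Oα = (⨆ r ∈ Set.Icc 1 k, tens (coeffGe 1) (G r)) ⊔
        (⨆ r ∈ Set.Icc (1 - k) 0, tens (coeffGe 0) (G r)) ⊔
        tens (coeffGe (-1)) (G (-k)))
    (σ' : ((LaurentSeries ℂ ⊗[ℂ] g) × g) →ₗ[ℂ] g × g)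
    (hσ' : ∀ z : (LaurentSeries ℂ ⊗[ℂ] g) × g,
      σ' z = (π k (cf 1 z.1) + π 0 (cf 0 z.1) + π (-k) (cf (-1) z.1), z.2))
    -- the embedding `g[u] → g((u⁻¹)) × g`, `p(u) ↦ (p(u), p(0))`
    (em : (Polynomial ℂ ⊗[ℂ] g) →ₗ[ℂ] (LaurentSeries ℂ ⊗[ℂ] g) × g)
    (hem : ∀ (p : Polynomial ℂ) (x : g),
      em (p ⊗ₜ x) =
        ((Polynomial.aeval (HahnSeries.single (-1) 1 : LaurentSeries ℂ) p) ⊗ₜ x,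
         Polynomial.eval 0 p • x)) :
    σ' '' ((Oα.prod (⊤ : Submodule ℂ g) : Set _) ∩ Set.range em)
      = {p : g × g | p.1 ∈ G 0 ⊔ G (-k) ∧
          p.2 ∈ (⨆ r ∈ Set.Icc (-k) (0 : ℤ), G r) ∧ π 0 p.1 = π 0 p.2} :=
  image_of_polynomials_is_Delta_alpha_general k hk G hGtop cf hcf π hπ₁ hπ₂ Oα hOα σ' hσ' em hem
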